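/- Let a ∈ ℕ with a ≥ 2, let n ∈ ℕ be even with n > 2, let R_n ∈ GL(2,ℝ) be the rotation matrix by angle 2π/n, and let V = V^{a,n} = {(x,y) ∈ ℝ² : |y| ∈ (1,a], |x| ≤ tan(π/n)|y|}. Set 𝒟 = {a^k (R_n)^l : k ∈ ℤ, l = 0, …, n/2 − 1} ⊂ GL(2,ℝ). Then V tiles ℝ² under the action of 𝒟^{-T}: the sets g^{-T}V for g ∈ 𝒟 are pairwise disjoint up to Lebesgue-null sets, and their union equals ℝ² \ {0} up to a Lebesgue-null set; equivalently, ∑_{k∈ℤ} ∑_{l=0}^{n/2−1} 𝟙_{(a^k (R_n)^l)^{-T} V}(ξ) = 1 for almost every ξ ∈ ℝ². -/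

import Mathlib

open Matrix Set MeasureTheory
open scoped ENNReal

noncomputable section

/-- The rotation matrix by angle `2π/n`. -/
def Rmat (n : ℕ) : Matrix (Fin 2) (Fin 2) ℝ :=
  !![Real.cos (2 * Real.pi / n), -Real.sin (2 * Real.pi / n);
     Real.sin (2 * Real.pi / n), Real.cos (2 * Real.pi / n)]

/-- The set `V^{a,n} = {(x,y) ∈ ℝ² : |y| ∈ (1,a], |x| ≤ tan(π/n)|y|}`. -/
def Van (a n : ℕ) : Set (Fin 2 → ℝ) :=
  {v | |v 1| ∈ Set.Ioc 1 (a : ℝ) ∧ |v 0| ≤ Real.tan (Real.pi / n) * |v 1|}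

/-!
Write `ξ = r (cos θ, sin θ)`. Since `Rₙ` is orthogonal, `ξ ∈ (aᵏ Rₙˡ)^{-T} V` iff
`aᵏ Rₙ^{-l} ξ ∈ V`, i.e. iff the angle `θ - 2πl/n` lies in the double cone `|cos| ≤ sin (π/n)`
around the `y`-axis and `aᵏ r |sin (θ - 2πl/n)| ∈ (1, a]`. The `n/2` rotated copies of this
double cone cover the plane and overlap only along countably many lines through the origin;
off these lines exactly one `l` puts `ξ` in the cone, and then exactly one `k` matches the
height.
-/

namespace RotationTiling

open Real

def rotMat (θ : ℝ) : Matrix (Fin 2) (Fin 2) ℝ :=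
  !![cos θ, -sin θ; sin θ, cos θ]

def polarVec (r θ : ℝ) : Fin 2 → ℝ :=
  ![r * cos θ, r * sin θ]

lemma Rmat_eq_rotMat (n : ℕ) : Rmat n = rotMat (2 * π / n) := rfl

lemma rotMat_mul_rotMat (α β : ℝ) : rotMat α * rotMat β = rotMat (α + β) := by
  rw [rotMat, rotMat, rotMat, mul_fin_two, cos_add, sin_add]
  ext i j
  fin_cases i <;> fin_cases j <;> simp <;> ring

lemma rotMat_pow (θ : ℝ) (l : ℕ) : rotMat θ ^ l = rotMat (l * θ) := by
  induction l with
  | zero => simp [rotMat, one_fin_two]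
  | succ l ih => rw [pow_succ, ih, rotMat_mul_rotMat]; push_cast; ring_nf

lemma det_rotMat (θ : ℝ) : (rotMat θ).det = 1 := by
  rw [rotMat, det_fin_two_of]
  linear_combination sin_sq_add_cos_sq θ

lemma rotMat_transpose_mulVec_polarVec (α r θ : ℝ) :
    (rotMat α)ᵀ *ᵥ polarVec r θ = polarVec r (θ - α) := by
  ext i
  fin_cases i <;>
    simp [rotMat, polarVec, mulVec, dotProduct, Fin.sum_univ_two, cos_sub, sin_sub] <;> ring

lemma smul_polarVec (c r θ : ℝ) : c • polarVec r θ = polarVec (c * r) θ := by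
  ext i
  fin_cases i <;> simp [polarVec, mul_assoc]

lemma exists_eq_polarVec {ξ : Fin 2 → ℝ} (hξ : ξ ≠ 0) : ∃ r > 0, ∃ θ, ξ = polarVec r θ := by
  set z : ℂ := ⟨ξ 0, ξ 1⟩
  have hz : z ≠ 0 := fun h ↦ hξ <| by
    ext i
    fin_cases i
    exacts [congrArg Complex.re h, congrArg Complex.im h]
  refine ⟨‖z‖, norm_pos_iff.2 hz, z.arg, ?_⟩
  ext i
  fin_cases i
  exacts [(Complex.norm_mul_cos_arg z).symm, (Complex.norm_mul_sin_arg z).symm]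

lemma mem_image_inv_transpose_mulVec_iff {ι R : Type*} [Fintype ι] [DecidableEq ι] [CommRing R]
    {B : Matrix ι ι R} (hB : IsUnit B.det) (V : Set (ι → R)) (x : ι → R) :
    x ∈ (B⁻¹)ᵀ.mulVec '' V ↔ Bᵀ *ᵥ x ∈ V := by
  have hBT : IsUnit Bᵀ.det := by rwa [det_transpose]
  rw [transpose_nonsing_inv, image_eq_preimage_of_inverse (g := Bᵀ.mulVec)]
  · rfl
  · intro y; rw [mulVec_mulVec, mul_nonsing_inv _ hBT, one_mulVec]
  · intro y; rw [mulVec_mulVec, nonsing_inv_mul _ hBT, one_mulVec]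

lemma abs_cos_add_int_mul_pi (x : ℝ) (j : ℤ) : |cos (x + j * π)| = |cos x| := by
  rw [cos_add_int_mul_pi, abs_mul, abs_neg_one_zpow, one_mul]

lemma abs_cos_le_tan_mul_abs_sin_iff {t : ℝ} (ht : 0 < t) (ht' : t < π / 2) (φ : ℝ) :
    |cos φ| ≤ tan t * |sin φ| ↔ |cos φ| ≤ sin t := by
  have hct : 0 < cos t := cos_pos_of_mem_Ioo ⟨by linarith, ht'⟩
  have hst : 0 < sin t := sin_pos_of_pos_of_lt_pi ht (by linarith)
  have hφ : |sin φ| ^ 2 + |cos φ| ^ 2 = 1 := by rw [sq_abs, sq_abs, sin_sq_add_cos_sq]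
  have ht2 := sin_sq_add_cos_sq t
  have hc := abs_nonneg (cos φ)
  have hs := abs_nonneg (sin φ)
  rw [tan_eq_sin_div_cos, div_mul_eq_mul_div, le_div_iff₀ hct]
  -- `(|sin φ|, |cos φ|)` and `(cos t, sin t)` are unit vectors in the closed first quadrant,
  -- and the inequality compares their angles in both forms.
  constructor
  · intro h
    nlinarith [sq_nonneg (|sin φ| - cos t), sq_nonneg (|cos φ| - sin t),
      mul_nonneg hc hct.le, mul_nonneg hs hst.le]
  · intro h
    have hu : cos t ≤ |sin φ| := by nlinarith [sq_nonneg (|sin φ| + cos t)]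
    nlinarith

lemma abs_cos_lt_sin_of_mem_Ioo {t x : ℝ} (ht : t ≤ π / 2)
    (hx : x ∈ Ioo (π / 2 - t) (π / 2 + t)) : |cos x| < sin t := by
  obtain ⟨hx₁, hx₂⟩ := hx
  rw [abs_lt, ← cos_add_pi_div_two, ← cos_pi_div_two_sub]
  constructor
  · exact strictAntiOn_cos ⟨by linarith, by linarith⟩ ⟨by linarith, by linarith⟩ (by linarith)
  · exact strictAntiOn_cos ⟨by linarith, by linarith⟩ ⟨by linarith, by linarith⟩ hx₁

lemma sin_lt_abs_cos_of_mem_Ioo {t x : ℝ} (ht : 0 ≤ t)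
    (hx : x ∈ Ioo (π / 2 + t) (3 * π / 2 - t)) : sin t < |cos x| := by
  obtain ⟨hx₁, hx₂⟩ := hx
  suffices cos x < cos (t + π / 2) by rw [cos_add_pi_div_two] at this; linarith [neg_le_abs (cos x)]
  rcases le_or_gt x π with h | h
  · exact strictAntiOn_cos ⟨by linarith, by linarith⟩ ⟨by linarith, h⟩ (by linarith)
  · rw [← cos_two_pi_sub x]
    exact strictAntiOn_cos ⟨by linarith, by linarith⟩ ⟨by linarith, by linarith⟩ (by linarith)

lemma sin_ne_zero_of_abs_cos_le_sin {t φ : ℝ} (ht : 0 < t) (ht' : t < π / 2)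
    (h : |cos φ| ≤ sin t) : sin φ ≠ 0 := by
  have hsin : sin t < 1 := by
    simpa using sin_lt_sin_of_lt_of_le_pi_div_two (by linarith) le_rfl ht'
  intro h0
  rcases sin_eq_zero_iff_cos_eq.1 h0 with h1 | h1 <;> rw [h1] at h <;> norm_num at h <;> linarith

lemma existsUnique_zpow_mul_mem_Ioc {a t : ℝ} (ha : 1 < a) (ht : 0 < t) :
    ∃! k : ℤ, a ^ k * t ∈ Ioc 1 a := by
  have hlog : ∀ k : ℤ, a ^ k * t ∈ Ioc 1 a ↔ log t + k • log a ∈ Ioc 0 (0 + log a) := by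
    intro k
    have hpos : 0 < a ^ k * t := by positivity
    rw [zero_add, zsmul_eq_mul, ← log_zpow, add_comm, ← log_mul (by positivity) ht.ne',
      mem_Ioc, mem_Ioc, log_pos_iff hpos.le, log_le_log_iff hpos (by linarith)]
  simpa only [hlog] using existsUnique_add_zsmul_mem_Ioc (log_pos ha) (log t) 0

lemma abs_cos_add_mul_sub_mul_le_iff {m : ℕ} {s x : ℝ} (hm : 2 ≤ m) (hms : m * s = π)
    (hx : x ∈ Ioo (π / 2 - s / 2) (π / 2 + s / 2)) (p : ℤ) {l : ℕ} (hl : l < m) :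
    |cos (x + p * s - l * s)| ≤ sin (s / 2) ↔ (l : ℤ) = p % m := by
  have hm0 : (0 : ℤ) < m := by omega
  have hs : 0 < s := by
    have : (0 : ℝ) < m := by positivity
    nlinarith [pi_pos]
  have hs' : s ≤ π / 2 := by
    have : (2 : ℝ) ≤ m := by exact_mod_cast hm
    nlinarith
  -- `d` counts the sectors of width `s` between the angle and the cone around `π / 2`.
  set d := (p - l) % m with hd
  have hangle : x + p * s - l * s = (x + d * s) + ((p - l) / m : ℤ) * π := by
    have hdiv : (p : ℝ) - l = m * ((p - l) / m : ℤ) + d := by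
      exact_mod_cast (Int.mul_ediv_add_emod (p - l) m).symm
    rw [← hms]
    linear_combination s * hdiv
  have hd_eq_zero : (l : ℤ) = p % m ↔ d = 0 := by
    rw [hd, ← Int.dvd_iff_emod_eq_zero, ← Int.modEq_iff_dvd, Int.ModEq,
      Int.emod_eq_of_lt (a := l) (by positivity) (by exact_mod_cast hl)]
  rw [hangle, abs_cos_add_int_mul_pi, hd_eq_zero]
  rcases (show 0 ≤ d from Int.emod_nonneg _ hm0.ne').eq_or_lt with h0 | h1
  · rw [← h0]
    simpa using (abs_cos_lt_sin_of_mem_Ioo (by linarith) hx).le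
  · have hdm : d + 1 ≤ m := Int.emod_lt_of_pos _ hm0
    have h1' : (1 : ℝ) ≤ d := by exact_mod_cast h1
    have hdm' : (d : ℝ) + 1 ≤ m := by exact_mod_cast hdm
    refine iff_of_false (not_le.2 (sin_lt_abs_cos_of_mem_Ioo (by linarith) ⟨?_, ?_⟩)) h1.ne'
    · nlinarith [hx.1]
    · nlinarith [hx.2]

lemma polarVec_mem_Van_iff {a n : ℕ} (hn : 2 < n) {ρ : ℝ} (hρ : 0 < ρ) (φ : ℝ) :
    polarVec ρ φ ∈ Van a n ↔ ρ * |sin φ| ∈ Ioc 1 (a : ℝ) ∧ |cos φ| ≤ sin (π / n) := by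
  have hn' : (2 : ℝ) < n := by exact_mod_cast hn
  have ht : 0 < π / n := by positivity
  have ht' : π / n < π / 2 := div_lt_div_of_pos_left pi_pos two_pos hn'
  simp only [Van, polarVec, mem_ofPred_eq, cons_val_one, cons_val_zero, abs_mul, abs_of_pos hρ]
  rw [← abs_cos_le_tan_mul_abs_sin_iff ht ht', mul_left_comm, mul_le_mul_iff_right₀ hρ]

lemma polarVec_mem_image_iff {a n : ℕ} (ha : a ≠ 0) (hn : 2 < n) (k : ℤ) (l : ℕ) {r : ℝ}
    (hr : 0 < r) (θ : ℝ) :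
    polarVec r θ ∈ (((a : ℝ) ^ k • Rmat n ^ l)⁻¹)ᵀ.mulVec '' Van a n ↔
      (a : ℝ) ^ k * (r * |sin (θ - l * (2 * π / n))|) ∈ Ioc 1 (a : ℝ) ∧
        |cos (θ - l * (2 * π / n))| ≤ sin (π / n) := by
  have hak : 0 < (a : ℝ) ^ k := zpow_pos (by positivity) k
  have hdet : IsUnit ((a : ℝ) ^ k • rotMat (l * (2 * π / n))).det := by
    rw [det_smul, det_rotMat, mul_one]
    exact (pow_pos hak _).ne'.isUnit
  rw [Rmat_eq_rotMat, rotMat_pow, mem_image_inv_transpose_mulVec_iff hdet, transpose_smul,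
    smul_mulVec, rotMat_transpose_mulVec_polarVec, smul_polarVec,
    polarVec_mem_Van_iff hn (by positivity), mul_assoc]

lemma tsum_sum_indicator_polarVec {a n m : ℕ} (ha : 1 < a) (hnm : n = 2 * m) (hm : 2 ≤ m)
    {r x : ℝ} (hr : 0 < r) (hx : x ∈ Ioo (π / 2 - π / n) (π / 2 + π / n)) (p : ℤ) :
    ∑' k : ℤ, ∑ l ∈ Finset.range m,
      ((((a : ℝ) ^ k • Rmat n ^ l)⁻¹)ᵀ.mulVec '' Van a n).indicator (fun _ ↦ (1 : ℝ≥0∞))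
        (polarVec r (x + p * (2 * π / n))) = 1 := by
  classical
  set s := 2 * π / n
  have hn : (n : ℝ) = 2 * m := by exact_mod_cast hnm
  have hms : m * s = π := by
    have : (m : ℝ) ≠ 0 := by positivity
    simp only [s, hn]; field_simp
  have hs2 : π / n = s / 2 := by ring
  have hπn : 0 < π / n := by rw [hn]; positivity
  have hπn' : π / n < π / 2 := div_lt_div_of_pos_left pi_pos two_pos (by rw [hn]; norm_cast; omega)
  set l₀ := (p % m).toNat
  have hl₀ : (l₀ : ℤ) = p % m := Int.toNat_of_nonneg (Int.emod_nonneg _ (by omega))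
  have hl₀m : l₀ < m := by have := Int.emod_lt_of_pos p (by omega : (0 : ℤ) < m); omega
  have hcone : ∀ l < m, |cos (x + p * s - l * s)| ≤ sin (π / n) ↔ l = l₀ := fun l hl ↦ by
    rw [hs2, abs_cos_add_mul_sub_mul_le_iff hm hms (hs2 ▸ hx) p hl, ← hl₀, Nat.cast_inj]
  set t := r * |sin (x + p * s - l₀ * s)|
  have ht : 0 < t := mul_pos hr <| abs_pos.2 <|
    sin_ne_zero_of_abs_cos_le_sin hπn hπn' ((hcone l₀ hl₀m).2 rfl)
  obtain ⟨k₀, hk₀, hk₀_unique⟩ :=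
    existsUnique_zpow_mul_mem_Ioc (by exact_mod_cast ha : (1 : ℝ) < a) ht
  have hmem : ∀ k : ℤ, ∀ l < m, polarVec r (x + p * s) ∈
      (((a : ℝ) ^ k • Rmat n ^ l)⁻¹)ᵀ.mulVec '' Van a n ↔ l = l₀ ∧ k = k₀ := by
    intro k l hl
    rw [polarVec_mem_image_iff (by omega) (by omega) k l hr, hcone l hl]
    constructor
    · rintro ⟨hk, rfl⟩
      exact ⟨rfl, hk₀_unique k hk⟩
    · rintro ⟨rfl, rfl⟩
      exact ⟨hk₀, rfl⟩
  calc _ = ∑' k : ℤ, if k = k₀ then (1 : ℝ≥0∞) else 0 := by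
        refine tsum_congr fun k ↦ ?_
        rw [Finset.sum_congr rfl fun l hl ↦ by
          rw [indicator_apply, if_congr (hmem k l (Finset.mem_range.1 hl)) rfl rfl, ite_and]]
        rw [Finset.sum_ite_eq', if_pos (Finset.mem_range.2 hl₀m)]
    _ = 1 := tsum_ite_eq k₀ 1

lemma volume_setOf_sin_mul_sub_cos_mul_eq_zero (β : ℝ) :
    volume {ξ : Fin 2 → ℝ | sin β * ξ 0 - cos β * ξ 1 = 0} = 0 := by
  let f : (Fin 2 → ℝ) →ₗ[ℝ] ℝ := sin β • LinearMap.proj 0 - cos β • LinearMap.proj 1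
  have hf : f ![sin β, -cos β] ≠ 0 := by
    simp [f, ← sq, sin_sq_add_cos_sq]
  exact Measure.addHaar_submodule volume (LinearMap.ker f)
    fun htop ↦ hf (LinearMap.mem_ker.1 (htop ▸ Submodule.mem_top))

lemma ae_exists_eq_polarVec_add_int_mul {s : ℝ} (hs : 0 < s) (β : ℝ) :
    ∀ᵐ ξ : Fin 2 → ℝ, ∃ r > 0, ∃ x ∈ Ioo β (β + s), ∃ p : ℤ, ξ = polarVec r (x + p * s) := by
  have hline : ∀ q : ℤ, ∀ᵐ ξ : Fin 2 → ℝ, sin (β + q * s) * ξ 0 - cos (β + q * s) * ξ 1 ≠ 0 :=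
    fun q ↦ measure_eq_zero_iff_ae_notMem.1 (volume_setOf_sin_mul_sub_cos_mul_eq_zero _)
  filter_upwards [ae_all_iff.2 hline] with ξ hξ
  have hξ0 : ξ ≠ 0 := by
    rintro rfl
    exact hξ 0 (by simp)
  obtain ⟨r, hr, θ, rfl⟩ := exists_eq_polarVec hξ0
  have hmem := toIcoMod_mem_Ico hs β θ
  set x := toIcoMod hs β θ
  set p := toIcoDiv hs β θ
  have hθ : θ = x + p * s := by
    have := self_sub_toIcoDiv_zsmul hs β θ
    rw [zsmul_eq_mul] at this
    linarith
  refine ⟨r, hr, x, ⟨hmem.1.lt_of_ne fun heq ↦ hξ p ?_, hmem.2⟩, p, congrArg _ hθ⟩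
  rw [heq, ← hθ]
  simp only [polarVec, cons_val_zero, cons_val_one]
  ring

end RotationTiling

open RotationTiling Real

/-- The set `V^{a,n}` tiles `ℝ²` under the action of
`𝒟^{-T}` for `𝒟 = {aᵏ Rₙˡ : k ∈ ℤ, l = 0, …, n/2 - 1}`: for almost every
`ξ ∈ ℝ²`, `∑_{k ∈ ℤ} ∑_{l=0}^{n/2-1} 𝟙_{(aᵏ Rₙˡ)^{-T} V}(ξ) = 1`. -/
theorem statement_16 (a n : ℕ) (ha : 2 ≤ a) (hn : Even n) (hn2 : 2 < n) :
    ∀ᵐ (ξ : Fin 2 → ℝ) ∂volume,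
      (∑' k : ℤ, ∑ l ∈ Finset.range (n / 2),
        (((((a : ℝ) ^ k • Rmat n ^ l)⁻¹)ᵀ).mulVec '' Van a n).indicator
          (fun _ => (1 : ℝ≥0∞)) ξ) = 1 := by
  obtain ⟨m, hm⟩ := hn
  rw [show n / 2 = m by omega]
  have hs : 0 < 2 * π / n := by
    have : (0 : ℝ) < n := by exact_mod_cast (by omega : 0 < n)
    positivity
  filter_upwards [ae_exists_eq_polarVec_add_int_mul hs (π / 2 - π / n)]
    with ξ ⟨r, hr, x, hx, p, hξ⟩
  subst hξ
  rw [show π / 2 - π / n + 2 * π / n = π / 2 + π / n by ring] at hx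
  exact tsum_sum_indicator_polarVec (by omega) (by omega) (by omega) hr hx p
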